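/- arXiv:2109.14023 — 4 statements merged into one kernel-verified Lean document; each statement's English description precedes it below -/
import Mathlib

section
/- Fix 0 < t₁ < t₂ and λ ∈ ℝ, and for μ > 0, α > 0 define G(t) = exp(λt)·(1 + α·t)^μ. Then the map α ↦ (ln G(t₁) − λ·t₁)/(ln G(t₂) − λ·t₂) = ln(1 + α·t₁)/ln(1 + α·t₂) is strictly increasing on (0, ∞). -/
/-!
With `x = α t₁` and `y = α t₂`, the derivative of `α ↦ log (1 + α t₁) / log (1 + α t₂)` has the
sign of `x / (1 + x) · log (1 + y) - y / (1 + y) · log (1 + x)`, which is positive because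
`x ↦ (1 + x) log (1 + x) / x` is strictly increasing on `(0, ∞)`: its derivative is
`(x - log (1 + x)) / x²`.
-/

open Real Set

lemma hasDerivAt_log_one_add_mul {t α : ℝ} (h : 0 < 1 + α * t) :
    HasDerivAt (fun α => log (1 + α * t)) (t / (1 + α * t)) α := by
  simpa using (((hasDerivAt_id α).mul_const t).const_add 1).log h.ne'

lemma hasDerivAt_one_add_mul_log_one_add_div {x : ℝ} (hx : 0 < x) :
    HasDerivAt (fun x => (1 + x) * log (1 + x) / x) ((x - log (1 + x)) / x ^ 2) x := by
  have h1x : 1 + x ≠ 0 := by positivity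
  have hnum : HasDerivAt (fun x => (1 + x) * log (1 + x)) (log (1 + x) + 1) x := by
    refine (((hasDerivAt_id' x).const_add 1).fun_mul
      (((hasDerivAt_id' x).const_add 1).log h1x)).congr_deriv ?_
    field_simp
  refine (hnum.fun_div (hasDerivAt_id' x) hx.ne').congr_deriv ?_
  ring

lemma strictMonoOn_one_add_mul_log_one_add_div :
    StrictMonoOn (fun x => (1 + x) * log (1 + x) / x) (Ioi 0) := by
  refine strictMonoOn_of_hasDerivWithinAt_pos (convex_Ioi 0)
    (fun x hx => (hasDerivAt_one_add_mul_log_one_add_div hx).continuousAt.continuousWithinAt)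
    (fun x hx => (hasDerivAt_one_add_mul_log_one_add_div (interior_subset hx)).hasDerivWithinAt)
    fun x hx => ?_
  have hx : 0 < x := interior_subset hx
  have hlog : log (1 + x) < x := by
    linarith [log_lt_sub_one_of_pos (by positivity : 0 < 1 + x) (by linarith)]
  exact div_pos (by linarith) (by positivity)

lemma div_one_add_mul_log_one_add_lt {x y : ℝ} (hx : 0 < x) (hxy : x < y) :
    y / (1 + y) * log (1 + x) < x / (1 + x) * log (1 + y) := by
  have hy : 0 < y := hx.trans hxy
  have key := strictMonoOn_one_add_mul_log_one_add_div hx hy hxy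
  simp only at key
  rw [div_lt_div_iff₀ hx hy] at key
  rw [div_mul_eq_mul_div, div_mul_eq_mul_div, div_lt_div_iff₀ (by positivity) (by positivity)]
  nlinarith

lemma strictMonoOn_log_one_add_mul_div {t₁ t₂ : ℝ} (ht₁ : 0 < t₁) (ht : t₁ < t₂) :
    StrictMonoOn (fun α => log (1 + α * t₁) / log (1 + α * t₂)) (Ioi 0) := by
  have hderiv (α : ℝ) (hα : 0 < α) : HasDerivAt (fun α => log (1 + α * t₁) / log (1 + α * t₂))
      ((t₁ / (1 + α * t₁) * log (1 + α * t₂) - log (1 + α * t₁) * (t₂ / (1 + α * t₂)))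
        / log (1 + α * t₂) ^ 2) α :=
    (hasDerivAt_log_one_add_mul (by positivity)).fun_div
      (hasDerivAt_log_one_add_mul (by nlinarith)) (log_pos (by nlinarith)).ne'
  refine strictMonoOn_of_hasDerivWithinAt_pos (convex_Ioi 0)
    (fun α hα => (hderiv α hα).continuousAt.continuousWithinAt)
    (fun α hα => (hderiv α (interior_subset hα)).hasDerivWithinAt) fun α hα => ?_
  have hα : 0 < α := interior_subset hα
  have key := div_one_add_mul_log_one_add_lt (mul_pos hα ht₁) (mul_lt_mul_of_pos_left ht hα)
  have hL₂ : 0 < log (1 + α * t₂) := log_pos (by nlinarith)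
  refine div_pos (pos_of_mul_pos_right (a := α) ?_ hα.le) (by positivity)
  calc 0 < α * t₁ / (1 + α * t₁) * log (1 + α * t₂)
        - α * t₂ / (1 + α * t₂) * log (1 + α * t₁) := sub_pos.2 key
    _ = _ := by ring

lemma log_exp_mul_rpow_sub {a : ℝ} (ha : 0 < a) (c μ : ℝ) :
    log (exp c * a ^ μ) - c = μ * log a := by
  rw [log_mul (exp_ne_zero c) (rpow_pos_of_pos ha μ).ne', log_exp, log_rpow ha,
    add_sub_cancel_left]

theorem log_ratio_strictMono (t₁ t₂ lam : ℝ) (ht₁ : 0 < t₁) (ht : t₁ < t₂) :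
    (∀ μ : ℝ, 0 < μ → ∀ α : ℝ, 0 < α →
      (Real.log (Real.exp (lam * t₁) * (1 + α * t₁) ^ μ) - lam * t₁) /
        (Real.log (Real.exp (lam * t₂) * (1 + α * t₂) ^ μ) - lam * t₂) =
        Real.log (1 + α * t₁) / Real.log (1 + α * t₂)) ∧
    StrictMonoOn (fun α : ℝ => Real.log (1 + α * t₁) / Real.log (1 + α * t₂))
      (Set.Ioi 0) := by
  refine ⟨fun μ hμ α hα => ?_, strictMonoOn_log_one_add_mul_div ht₁ ht⟩
  rw [log_exp_mul_rpow_sub (by positivity), log_exp_mul_rpow_sub (by nlinarith)]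
  exact mul_div_mul_left _ _ hμ.ne'
end

section
/- For a > 0 and r ≥ 0, let R(τ) = ∫_ℝ exp(−a(τ² + μ²)) dμ = √(π/a)·exp(−a·τ²) be the line-integral (Radon) transform of the radial Gaussian g(x) = exp(−a|x|²) on ℝ². Then the Abel-type inversion formula holds: −(1/π)·∫_r^∞ R'(τ)/√(τ² − r²) dτ = exp(−a·r²) = g at radius r. -/
/-!
Writing `R(τ) = c e^{-aτ²}` with `c = √(π/a)`, we have `R'(τ)/τ = -2ac e^{-aτ²}`. The substitution
`τ = √(u² + r²)` maps `(0, ∞)` onto `(r, ∞)` with `dτ = (u/τ) du` and `√(τ² - r²) = u`, so the Abel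
integral becomes `∫₀^∞ R'(τ)/τ du = -2ac e^{-ar²} ∫₀^∞ e^{-au²} du = -a c² e^{-ar²} = -π e^{-ar²}`.
-/

open MeasureTheory Set Real

theorem integral_exp_neg_mul_sq_add_sq (a τ : ℝ) :
    ∫ μ : ℝ, exp (-a * (τ ^ 2 + μ ^ 2)) = √(π / a) * exp (-a * τ ^ 2) := by
  simp_rw [mul_add, exp_add]
  rw [integral_const_mul, integral_gaussian, mul_comm]

theorem hasDerivAt_const_mul_exp_neg_mul_sq (c a τ : ℝ) :
    HasDerivAt (fun τ => c * exp (-a * τ ^ 2)) (-2 * a * c * τ * exp (-a * τ ^ 2)) τ := by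
  have h := (((hasDerivAt_pow 2 τ).const_mul (-a)).exp).const_mul c
  exact h.congr_deriv (by norm_num; ring)

section AbelSubstitution

variable {r : ℝ}

theorem image_sqrt_sq_add_sq_Ioi (hr : 0 ≤ r) :
    (fun u => √(u ^ 2 + r ^ 2)) '' Ioi 0 = Ioi r := by
  ext τ
  constructor
  · rintro ⟨u, hu, rfl⟩
    calc r = √(r ^ 2) := (sqrt_sq hr).symm
      _ < √(u ^ 2 + r ^ 2) := sqrt_lt_sqrt (by positivity) (by nlinarith [mem_Ioi.mp hu])
  · intro (hrτ : r < τ)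
    refine ⟨√(τ ^ 2 - r ^ 2), sqrt_pos.mpr (by nlinarith), ?_⟩
    dsimp only
    rw [sq_sqrt (by nlinarith), sub_add_cancel, sqrt_sq (hr.trans hrτ.le)]

theorem injOn_sqrt_sq_add_sq : InjOn (fun u => √(u ^ 2 + r ^ 2)) (Ioi 0) := by
  intro u hu v hv huv
  have hsq : u ^ 2 + r ^ 2 = v ^ 2 + r ^ 2 := by
    rwa [sqrt_inj (by positivity) (by positivity)] at huv
  exact (pow_left_inj₀ (le_of_lt hu) (le_of_lt hv) two_ne_zero).mp (by linarith)

theorem hasDerivAt_sqrt_sq_add_sq {u : ℝ} (hu : u ≠ 0) :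
    HasDerivAt (fun u => √(u ^ 2 + r ^ 2)) (u / √(u ^ 2 + r ^ 2)) u := by
  have h := ((hasDerivAt_pow 2 u).add_const (r ^ 2)).sqrt (by positivity)
  exact h.congr_deriv (by field_simp; norm_num)

theorem integral_Ioi_div_sqrt_sq_sub_sq (hr : 0 ≤ r) (f : ℝ → ℝ) :
    ∫ τ in Ioi r, f τ / √(τ ^ 2 - r ^ 2) =
      ∫ u in Ioi 0, f √(u ^ 2 + r ^ 2) / √(u ^ 2 + r ^ 2) := by
  rw [← image_sqrt_sq_add_sq_Ioi hr, integral_image_eq_integral_abs_deriv_smul measurableSet_Ioi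
    (fun u hu => (hasDerivAt_sqrt_sq_add_sq (ne_of_gt hu)).hasDerivWithinAt)
    injOn_sqrt_sq_add_sq]
  refine setIntegral_congr_fun measurableSet_Ioi fun u (hu : 0 < u) => ?_
  have hτ : 0 < √(u ^ 2 + r ^ 2) := sqrt_pos.mpr (by positivity)
  rw [sq_sqrt (by positivity), add_sub_cancel_right, sqrt_sq hu.le, smul_eq_mul,
    abs_of_pos (div_pos hu hτ)]
  field_simp

end AbelSubstitution

theorem abel_inversion_gaussian (a : ℝ) (ha : 0 < a) (r : ℝ) (hr : 0 ≤ r)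
    (R : ℝ → ℝ) (hR : ∀ τ, R τ = Real.sqrt (Real.pi / a) * Real.exp (-a * τ ^ 2)) :
    (∀ τ : ℝ, ∫ μ : ℝ, Real.exp (-a * (τ ^ 2 + μ ^ 2)) = R τ) ∧
    -(1 / Real.pi) * ∫ τ in Set.Ioi r, deriv R τ / Real.sqrt (τ ^ 2 - r ^ 2) =
      Real.exp (-a * r ^ 2) := by
  refine ⟨fun τ => by rw [hR, integral_exp_neg_mul_sq_add_sq], ?_⟩
  set c := √(π / a) with hc_def
  have hderiv (τ : ℝ) : deriv R τ = -2 * a * c * τ * exp (-a * τ ^ 2) := by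
    rw [funext hR]
    exact (hasDerivAt_const_mul_exp_neg_mul_sq c a τ).deriv
  have hintegrand : ∀ u ∈ Ioi (0 : ℝ), deriv R √(u ^ 2 + r ^ 2) / √(u ^ 2 + r ^ 2) =
      -2 * a * c * exp (-a * r ^ 2) * exp (-a * u ^ 2) := by
    intro u (hu : 0 < u)
    have hτ : √(u ^ 2 + r ^ 2) ≠ 0 := (sqrt_pos.mpr (by positivity)).ne'
    rw [hderiv, sq_sqrt (by positivity), mul_add, exp_add]
    field_simp
  have hc : a * (c * c) = π := by
    rw [mul_self_sqrt (by positivity)]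
    field_simp
  rw [integral_Ioi_div_sqrt_sq_sub_sq hr, setIntegral_congr_fun measurableSet_Ioi hintegrand,
    integral_const_mul, integral_gaussian_Ioi, ← hc_def]
  field_simp
  linear_combination hc
end

section
/- Let φ be a nonnegative continuous compactly supported function on ℝⁿ with ∫φ = 1, and φ_ε(x) = ε^{−n}φ(x/ε). Then for ε₁, ε₂ > 0, W¹_κ(φ_{ε₁}dx, φ_{ε₂}dx) ≤ κ·|ε₁ − ε₂|·∫|y|·φ(y) dy. -/
/-!
The substitution `x = ε • y` turns the pairing of `ψ` with `φ_{ε₁} - φ_{ε₂}` into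
`∫ (ψ (ε₁ • y) - ψ (ε₂ • y)) * φ y`, and the Lipschitz bound
`|ψ (ε₁ • y) - ψ (ε₂ • y)| ≤ κ * |ε₁ - ε₂| * ‖y‖` bounds this by the right-hand side for every
admissible `ψ`, hence also their supremum.
-/

open MeasureTheory Module

section Rescale

variable {E : Type*} [NormedAddCommGroup E] [NormedSpace ℝ E] [MeasurableSpace E] [BorelSpace E]
  [FiniteDimensional ℝ E] (μ : Measure E) [μ.IsAddHaarMeasure]

theorem integral_mul_zpow_mul_comp_inv_smul (ψ φ : E → ℝ) {ε : ℝ} (hε : 0 < ε) :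
    ∫ x, ψ x * (ε ^ (-(finrank ℝ E : ℤ)) * φ (ε⁻¹ • x)) ∂μ = ∫ y, ψ (ε • y) * φ y ∂μ := by
  have hscale :=
    Measure.integral_comp_smul_of_nonneg μ (fun x => ψ x * φ (ε⁻¹ • x)) ε (hR := hε.le)
  simp only [smul_smul, inv_mul_cancel₀ hε.ne', one_smul, smul_eq_mul] at hscale
  simp_rw [mul_left_comm (ψ _), integral_const_mul, hscale, zpow_neg, zpow_natCast]

theorem integral_mul_sub_zpow_mul_comp_inv_smul {ψ φ : E → ℝ} (hψ : Continuous ψ)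
    (hφ : Continuous φ) (hφc : HasCompactSupport φ) {ε₁ ε₂ : ℝ} (hε₁ : 0 < ε₁) (hε₂ : 0 < ε₂) :
    ∫ x, ψ x * (ε₁ ^ (-(finrank ℝ E : ℤ)) * φ (ε₁⁻¹ • x)
        - ε₂ ^ (-(finrank ℝ E : ℤ)) * φ (ε₂⁻¹ • x)) ∂μ
      = ∫ y, (ψ (ε₁ • y) - ψ (ε₂ • y)) * φ y ∂μ := by
  have hint_rescaled : ∀ ε : ℝ, 0 < ε →
      Integrable (fun x => ψ x * (ε ^ (-(finrank ℝ E : ℤ)) * φ (ε⁻¹ • x))) μ := fun ε hε =>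
    (by fun_prop : Continuous _).integrable_of_hasCompactSupport
      ((hφc.comp_smul (inv_ne_zero hε.ne')).mul_left.mul_left)
  have hint_comp_smul : ∀ ε : ℝ, Integrable (fun y => ψ (ε • y) * φ y) μ := fun ε =>
    (by fun_prop : Continuous _).integrable_of_hasCompactSupport hφc.mul_left
  simp_rw [mul_sub, sub_mul]
  rw [integral_sub (hint_rescaled ε₁ hε₁) (hint_rescaled ε₂ hε₂),
    integral_sub (hint_comp_smul ε₁) (hint_comp_smul ε₂),
    integral_mul_zpow_mul_comp_inv_smul μ ψ φ hε₁, integral_mul_zpow_mul_comp_inv_smul μ ψ φ hε₂]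

end Rescale

theorem LipschitzWith.integral_sub_comp_smul_mul_le {E : Type*} [NormedAddCommGroup E]
    [NormedSpace ℝ E] [MeasurableSpace E] {μ : Measure E} {κ : NNReal} {ψ φ : E → ℝ}
    (hψ : LipschitzWith κ ψ) (hφ0 : ∀ y, 0 ≤ φ y) (hmoment : Integrable (fun y => ‖y‖ * φ y) μ)
    (ε₁ ε₂ : ℝ) :
    ∫ y, (ψ (ε₁ • y) - ψ (ε₂ • y)) * φ y ∂μ ≤ κ * |ε₁ - ε₂| * ∫ y, ‖y‖ * φ y ∂μ := by
  have hpoint : ∀ y, (ψ (ε₁ • y) - ψ (ε₂ • y)) * φ y ≤ κ * |ε₁ - ε₂| * (‖y‖ * φ y) := by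
    intro y
    have hlip : |ψ (ε₁ • y) - ψ (ε₂ • y)| ≤ κ * (|ε₁ - ε₂| * ‖y‖) := by
      have := hψ.dist_le_mul (ε₁ • y) (ε₂ • y)
      rwa [Real.dist_eq, dist_eq_norm, ← sub_smul, norm_smul, Real.norm_eq_abs] at this
    rw [← mul_assoc]
    exact mul_le_mul_of_nonneg_right ((le_abs_self _).trans (by linarith)) (hφ0 y)
  rw [← integral_const_mul]
  by_cases hint : Integrable (fun y => (ψ (ε₁ • y) - ψ (ε₂ • y)) * φ y) μ
  · exact integral_mono hint (hmoment.const_mul _) hpoint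
  · rw [integral_undef hint]
    exact integral_nonneg fun y =>
      mul_nonneg (mul_nonneg κ.2 (abs_nonneg _)) (mul_nonneg (norm_nonneg y) (hφ0 y))

theorem wasserstein_mollifier_general (n : ℕ) (φ : EuclideanSpace ℝ (Fin n) → ℝ)
    (hφ : Continuous φ) (hφ0 : ∀ x, 0 ≤ φ x) (hφc : HasCompactSupport φ)
    (κ : NNReal) (ε₁ ε₂ : ℝ) (hε₁ : 0 < ε₁) (hε₂ : 0 < ε₂) :
    sSup {r : ℝ | ∃ ψ : EuclideanSpace ℝ (Fin n) → ℝ,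
        (∀ z, |ψ z| ≤ 1) ∧ LipschitzWith κ ψ ∧
        r = ∫ x, ψ x * (ε₁ ^ (-(n : ℤ)) * φ (ε₁⁻¹ • x) - ε₂ ^ (-(n : ℤ)) * φ (ε₂⁻¹ • x))} ≤
      (κ : ℝ) * |ε₁ - ε₂| * ∫ y, ‖y‖ * φ y := by
  have hmoment : Integrable (fun y : EuclideanSpace ℝ (Fin n) => ‖y‖ * φ y) :=
    (by fun_prop : Continuous _).integrable_of_hasCompactSupport hφc.mul_left
  have hmoment_nonneg : 0 ≤ ∫ y, ‖y‖ * φ y :=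
    integral_nonneg fun y => mul_nonneg (norm_nonneg y) (hφ0 y)
  refine Real.sSup_le ?_ (by positivity)
  rintro r ⟨ψ, -, hψ, rfl⟩
  have hsplit := integral_mul_sub_zpow_mul_comp_inv_smul volume hψ.continuous hφ hφc hε₁ hε₂
  rw [finrank_euclideanSpace_fin] at hsplit
  rw [hsplit]
  exact hψ.integral_sub_comp_smul_mul_le hφ0 hmoment ε₁ ε₂

theorem wasserstein_mollifier (n : ℕ) (φ : EuclideanSpace ℝ (Fin n) → ℝ)
    (hφ : Continuous φ) (hφ0 : ∀ x, 0 ≤ φ x) (hφc : HasCompactSupport φ)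
    (hφ1 : ∫ x, φ x = 1) (κ : NNReal) (hκ : 0 < κ) (ε₁ ε₂ : ℝ) (hε₁ : 0 < ε₁) (hε₂ : 0 < ε₂) :
    sSup {r : ℝ | ∃ ψ : EuclideanSpace ℝ (Fin n) → ℝ,
        (∀ z, |ψ z| ≤ 1) ∧ LipschitzWith κ ψ ∧
        r = ∫ x, ψ x * (ε₁ ^ (-(n : ℤ)) * φ (ε₁⁻¹ • x) - ε₂ ^ (-(n : ℤ)) * φ (ε₂⁻¹ • x))} ≤
      (κ : ℝ) * |ε₁ - ε₂| * ∫ y, ‖y‖ * φ y :=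
  wasserstein_mollifier_general n φ hφ hφ0 hφc κ ε₁ ε₂ hε₁ hε₂
end

section
/- Let λ : ℝ → ℝ be continuous. The function u(x,θ) = ∫₀^∞ exp(−∫₀^t λ(x−rθ)dr)·f(x − tθ, θ) dt, for f continuous, compactly supported in x, solves the ballistic transport equation θ·∇_x u + λ·u = f along lines: for every x, θ, the function t ↦ u(x + tθ, θ) is differentiable with derivative f(x+tθ,θ) − λ(x+tθ)·u(x+tθ,θ). -/
/-!
Restricted to the line `τ ↦ x + τθ`, the substitution `s ↦ τ - s` rewrites `u` in
integrating-factor form `u(x + τθ) = e^{-Λ(τ)} ∫_{-∞}^τ e^{Λ(s)} f(x + sθ) ds`, where `Λ` is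
a primitive of `λ` along the line. The product rule and the fundamental theorem of calculus
then give the transport equation; `f` has compact support along the line because `θ ≠ 0`,
which makes the integral converge.
-/

open MeasureTheory Set

variable {E : Type*} [NormedAddCommGroup E] [NormedSpace ℝ E]

theorem integral_Ioi_zero_comp_sub_left (g : ℝ → E) (τ : ℝ) :
    ∫ s in Ioi 0, g (τ - s) = ∫ s in Iio τ, g s := by
  have h := (Measure.measurePreserving_sub_left volume τ).setIntegral_preimage_emb
    (measurableEmbedding_subLeft τ) g (Iio τ)
  convert h using 2
  ext s; simp

theorem hasDerivAt_integral_Iio [CompleteSpace E] {g : ℝ → E} (hg : Continuous g)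
    (hgi : Integrable g) (t : ℝ) :
    HasDerivAt (fun τ => ∫ s in Iio τ, g s) (g t) t := by
  have hsplit : (fun τ => ∫ s in Iio τ, g s) =
      fun τ => (∫ s in Iio 0, g s) + ∫ s in 0..τ, g s := by
    ext τ
    rw [← intervalIntegral.integral_Iio_sub_Iio' hgi.integrableOn hgi.integrableOn]
    abel
  rw [hsplit]
  exact (hg.integral_hasStrictDerivAt 0 t).hasDerivAt.const_add _

theorem HasCompactSupport.comp_line {F M : Type*} [NormedAddCommGroup F] [NormedSpace ℝ F]
    [TopologicalSpace M] [Zero M] {f : F → M} (hf : HasCompactSupport f) (x : F) {θ : F}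
    (hθ : θ ≠ 0) :
    HasCompactSupport fun s : ℝ => f (x + s • θ) :=
  hf.comp_isClosedEmbedding
    ((Homeomorph.addLeft x).isClosedEmbedding.comp (isClosedEmbedding_smul_left hθ))

noncomputable def attenuatedIntegral (L : ℝ → ℝ) (G : ℝ → E) (τ : ℝ) : E :=
  ∫ s in Ioi 0, Real.exp (-∫ r in 0..s, L (τ - r)) • G (τ - s)

theorem attenuatedIntegral_eq {L : ℝ → ℝ} (hL : Continuous L) (G : ℝ → E) (τ : ℝ) :
    attenuatedIntegral L G τ = Real.exp (-∫ r in 0..τ, L r) •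
      ∫ s in Iio τ, Real.exp (∫ r in 0..s, L r) • G s := by
  have hL_int : ∀ a b, IntervalIntegrable L volume a b := hL.intervalIntegrable
  have hshift : ∀ s, ∫ r in 0..s, L (τ - r) = (∫ r in 0..τ, L r) - ∫ r in 0..τ - s, L r := by
    intro s
    rw [intervalIntegral.integral_comp_sub_left, sub_zero,
      intervalIntegral.integral_interval_sub_left (hL_int 0 τ) (hL_int 0 (τ - s))]
  rw [← integral_Ioi_zero_comp_sub_left, ← integral_smul]
  refine setIntegral_congr_fun measurableSet_Ioi fun s _ => ?_
  rw [hshift, smul_smul, ← Real.exp_add]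
  ring_nf

theorem hasDerivAt_attenuatedIntegral [CompleteSpace E] {L : ℝ → ℝ} {G : ℝ → E}
    (hL : Continuous L) (hG : Continuous G) (hGc : HasCompactSupport G) (t : ℝ) :
    HasDerivAt (attenuatedIntegral L G)
      (G t - L t • attenuatedIntegral L G t) t := by
  set Λ : ℝ → ℝ := fun τ => ∫ r in 0..τ, L r
  have hΛ : ∀ τ, HasDerivAt Λ (L τ) τ := fun τ => (hL.integral_hasStrictDerivAt 0 τ).hasDerivAt
  have hΛc : Continuous Λ := continuous_iff_continuousAt.2 fun τ => (hΛ τ).continuousAt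
  set φ : ℝ → E := fun s => Real.exp (Λ s) • G s
  have hφ : Continuous φ := (Real.continuous_exp.comp hΛc).smul hG
  have hφi : Integrable φ := hφ.integrable_of_hasCompactSupport hGc.smul_left
  have hexp : HasDerivAt (fun τ => Real.exp (-Λ τ)) (Real.exp (-Λ t) * -L t) t := (hΛ t).neg.exp
  have key : HasDerivAt (fun τ => Real.exp (-Λ τ) • ∫ s in Iio τ, φ s)
      (Real.exp (-Λ t) • φ t + (Real.exp (-Λ t) * -L t) • ∫ s in Iio t, φ s) t :=
    hexp.smul (hasDerivAt_integral_Iio hφ hφi t)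
  rw [funext (attenuatedIntegral_eq hL G)]
  convert key using 1
  have hcancel : Real.exp (-Λ t) • φ t = G t := by
    rw [smul_smul, ← Real.exp_add, neg_add_cancel, Real.exp_zero, one_smul]
  rw [hcancel, mul_neg, neg_smul, mul_comm, ← sub_eq_add_neg, ← smul_smul]

theorem ballistic_transport_general (n : ℕ) (θ : EuclideanSpace ℝ (Fin n))
    (hθ : ‖θ‖ = 1) (lam : EuclideanSpace ℝ (Fin n) → ℝ) (hlam : Continuous lam)
    (f : EuclideanSpace ℝ (Fin n) → ℝ) (hf : Continuous f) (hfc : HasCompactSupport f)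
    (u : EuclideanSpace ℝ (Fin n) → ℝ)
    (hu : ∀ x, u x = ∫ t in Set.Ioi (0:ℝ),
        Real.exp (-∫ r in (0:ℝ)..t, lam (x - r • θ)) * f (x - t • θ)) :
    ∀ x : EuclideanSpace ℝ (Fin n), ∀ t : ℝ,
      HasDerivAt (fun τ : ℝ => u (x + τ • θ))
        (f (x + t • θ) - lam (x + t • θ) * u (x + t • θ)) t := by
  intro x t
  have hθ₀ : θ ≠ 0 := norm_ne_zero_iff.mp (hθ ▸ one_ne_zero)
  have hline : Continuous fun s : ℝ => x + s • θ := by fun_prop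
  have hu_line : ∀ τ : ℝ, u (x + τ • θ) =
      attenuatedIntegral (fun s => lam (x + s • θ)) (fun s => f (x + s • θ)) τ := by
    intro τ
    simp only [hu, attenuatedIntegral, smul_eq_mul, add_sub_assoc, ← sub_smul]
  rw [funext hu_line, hu_line]
  exact hasDerivAt_attenuatedIntegral (hlam.comp hline) (hf.comp hline) (hfc.comp_line x hθ₀) t

theorem ballistic_transport (n : ℕ) (hn : 1 ≤ n) (θ : EuclideanSpace ℝ (Fin n))
    (hθ : ‖θ‖ = 1) (lam : EuclideanSpace ℝ (Fin n) → ℝ) (hlam : Continuous lam)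
    (hlam_bdd : ∃ M, ∀ x, |lam x| ≤ M)
    (f : EuclideanSpace ℝ (Fin n) → ℝ) (hf : Continuous f) (hfc : HasCompactSupport f)
    (u : EuclideanSpace ℝ (Fin n) → ℝ)
    (hu : ∀ x, u x = ∫ t in Set.Ioi (0:ℝ),
        Real.exp (-∫ r in (0:ℝ)..t, lam (x - r • θ)) * f (x - t • θ)) :
    ∀ x : EuclideanSpace ℝ (Fin n), ∀ t : ℝ,
      HasDerivAt (fun τ : ℝ => u (x + τ • θ))
        (f (x + t • θ) - lam (x + t • θ) * u (x + t • θ)) t :=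
  ballistic_transport_general n θ hθ lam hlam f hf hfc u hu
end
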